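/- arXiv:2511.02688 — 6 statements merged into one kernel-verified Lean document; each statement's English description precedes it below -/
import Mathlib

section
/- Let n ≥ 0, R > 0, and let p, q be two distinct points of the Euclidean space ℝ^{n+1} (EuclideanSpace ℝ (Fin (n+1))). Then there exists ρ < R such that the intersection closedBall p R ∩ closedBall q R is contained in closedBall (midpoint ℝ p q) ρ. -/
/-- Euclidean lens lemma: a nontrivial lens (intersection of two closed balls of the
same radius `R` with distinct centres) is contained in a closed ball of some radius
`ρ < R` centred at the midpoint of the two centres. -/
theorem lens_subset_smaller_ball (n : ℕ) (R : ℝ) (hR : 0 < R)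
    (p q : EuclideanSpace ℝ (Fin (n + 1))) (hpq : p ≠ q) :
    ∃ ρ < R, Metric.closedBall p R ∩ Metric.closedBall q R ⊆
      Metric.closedBall (midpoint ℝ p q) ρ := by
  set d : ℝ := dist p q with hd
  have hd0 : 0 < d := dist_pos.mpr hpq
  refine ⟨Real.sqrt (R ^ 2 - d ^ 2 / 4), ?_, ?_⟩
  · rcases le_or_gt (R ^ 2 - d ^ 2 / 4) 0 with h | h
    · calc Real.sqrt (R ^ 2 - d ^ 2 / 4) = 0 := Real.sqrt_eq_zero_of_nonpos h
        _ < R := hR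
    · have : R ^ 2 - d ^ 2 / 4 < R ^ 2 := by nlinarith
      calc Real.sqrt (R ^ 2 - d ^ 2 / 4) < Real.sqrt (R ^ 2) :=
            Real.sqrt_lt_sqrt (le_of_lt h) this
        _ = R := Real.sqrt_sq hR.le
  · rintro x ⟨hx1, hx2⟩
    simp only [Metric.mem_closedBall] at hx1 hx2 ⊢
    have hdle : d ≤ 2 * R := by
      have ht := dist_triangle p x q
      rw [dist_comm p x] at ht
      linarith
    rw [Real.le_sqrt dist_nonneg]
    swap
    · nlinarith
    have key : ‖(x - p) + (x - q)‖ ^ 2 + ‖(x - p) - (x - q)‖ ^ 2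
        = 2 * (‖x - p‖ ^ 2 + ‖x - q‖ ^ 2) := by
      have := parallelogram_law_with_norm ℝ (x - p) (x - q)
      nlinarith [this]
    have h1 : (x - p) + (x - q) = (2 : ℝ) • (x - midpoint ℝ p q) := by
      rw [midpoint_eq_smul_add, invOf_eq_inv]
      module
    have h2 : (x - p) - (x - q) = q - p := by abel
    rw [h1, h2, norm_smul] at key
    have hdx : ‖x - midpoint ℝ p q‖ = dist x (midpoint ℝ p q) := (dist_eq_norm _ _).symm
    have hqp : ‖q - p‖ = d := by rw [hd, dist_comm, dist_eq_norm]
    have hxp : ‖x - p‖ = dist x p := (dist_eq_norm _ _).symm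
    have hxq : ‖x - q‖ = dist x q := (dist_eq_norm _ _).symm
    rw [hdx, hqp, hxp, hxq] at key
    simp only [Real.norm_ofNat] at key
    nlinarith [dist_nonneg (x := x) (y := p), dist_nonneg (x := x) (y := q)]
end

section
/- Let n ≥ 0 and let p, q be unit vectors in EuclideanSpace ℝ (Fin (n+2)) with p ≠ q, and let 0 < R < π/2. Then there exists a unit vector c such that every unit vector z satisfying arccos⟪z, p⟫ ≤ R and arccos⟪z, q⟫ ≤ R also satisfies arccos⟪z, c⟫ < R. -/
/-!
For `R < π / 2` the condition `arccos ⟪z, p⟫ ≤ R` says `cos R ≤ ⟪z, p⟫` with `cos R > 0`.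
Adding the two conditions gives `2 cos R ≤ ⟪z, p + q⟫`, while `‖p + q‖ < 2` by strict
convexity of the unit ball, so the midpoint direction `c = (p + q) / ‖p + q‖` satisfies
`⟪z, c⟫ > cos R`. When `p = -q` the lens is empty.
-/

open Real

namespace Real

theorem arccos_le_iff_cos_le {x y : ℝ} (hy : y ∈ Set.Ico 0 π) : arccos x ≤ y ↔ cos y ≤ x := by
  rw [arccos, sub_le_comm, le_arcsin_iff_sin_le' ⟨by linarith [hy.2], by linarith [hy.1]⟩,
    sin_pi_div_two_sub]

theorem arccos_lt_iff_cos_lt {x y : ℝ} (hy : y ∈ Set.Ioc 0 π) : arccos x < y ↔ cos y < x := by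
  rw [arccos, sub_lt_comm, lt_arcsin_iff_sin_lt' ⟨by linarith [hy.2], by linarith [hy.1]⟩,
    sin_pi_div_two_sub]

end Real

theorem norm_add_lt_two_of_norm_eq_one {E : Type*} [NormedAddCommGroup E] [NormedSpace ℝ E]
    [StrictConvexSpace ℝ E] {x y : E} (hx : ‖x‖ = 1) (hy : ‖y‖ = 1) (hxy : x ≠ y) :
    ‖x + y‖ < 2 := by
  have := norm_add_lt_of_not_sameRay ((not_sameRay_iff_of_norm_eq (hx.trans hy.symm)).2 hxy)
  rwa [hx, hy, one_add_one_eq_two] at this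

section InnerProductSpace

variable {E : Type*} [NormedAddCommGroup E] [InnerProductSpace ℝ E]

theorem lt_inner_inv_norm_smul_add {p q z : E} {k : ℝ} (hk : 0 < k) (hpq : ‖p + q‖ < 2)
    (hp : k ≤ inner ℝ z p) (hq : k ≤ inner ℝ z q) :
    k < inner ℝ z (‖p + q‖⁻¹ • (p + q)) := by
  have hsum : 2 * k ≤ inner ℝ z (p + q) := by rw [inner_add_right]; linarith
  have hpq_pos : 0 < ‖p + q‖ := by
    refine norm_pos_iff.2 fun h => ?_
    rw [h, inner_zero_right] at hsum
    linarith
  rw [real_inner_smul_right, ← div_eq_inv_mul, lt_div_iff₀ hpq_pos]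
  nlinarith

theorem exists_norm_eq_one_forall_lt_inner {p q : E} (hp : ‖p‖ = 1) (hq : ‖q‖ = 1)
    (hpq : p ≠ q) {k : ℝ} (hk : 0 < k) :
    ∃ c : E, ‖c‖ = 1 ∧ ∀ z : E, k ≤ inner ℝ z p → k ≤ inner ℝ z q → k < inner ℝ z c := by
  by_cases hopp : p + q = 0
  · refine ⟨p, hp, fun z hzp hzq => ?_⟩
    rw [eq_neg_of_add_eq_zero_right hopp, inner_neg_right] at hzq
    linarith
  · refine ⟨‖p + q‖⁻¹ • (p + q), ?_, fun z => lt_inner_inv_norm_smul_add hk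
      (norm_add_lt_two_of_norm_eq_one hp hq hpq)⟩
    rw [norm_smul, norm_inv, norm_norm, inv_mul_cancel₀ (norm_ne_zero_iff.2 hopp)]

end InnerProductSpace

/-- Spherical lens lemma: on the round unit sphere `S^{n+1} ⊆ ℝ^{n+2}` with geodesic
distance `d(x, y) = arccos ⟪x, y⟫`, a nontrivial spherical lens of radius `R < π/2`
(intersection of two geodesic balls of radius `R` with distinct centres) is contained
in an open geodesic ball of radius `R` about some unit vector `c`. -/
theorem spherical_lens_subset_open_ball (n : ℕ)
    (p q : EuclideanSpace ℝ (Fin (n + 2))) (hp : ‖p‖ = 1) (hq : ‖q‖ = 1)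
    (hpq : p ≠ q) (R : ℝ) (hR0 : 0 < R) (hRlt : R < π / 2) :
    ∃ c : EuclideanSpace ℝ (Fin (n + 2)), ‖c‖ = 1 ∧
      ∀ z : EuclideanSpace ℝ (Fin (n + 2)), ‖z‖ = 1 →
        Real.arccos (inner ℝ z p) ≤ R → Real.arccos (inner ℝ z q) ≤ R →
        Real.arccos (inner ℝ z c) < R := by
  have hRπ : R < π := by linarith [pi_pos]
  obtain ⟨c, hc, hlens⟩ := exists_norm_eq_one_forall_lt_inner hp hq hpq
    (cos_pos_of_mem_Ioo ⟨by linarith, hRlt⟩)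
  refine ⟨c, hc, fun z _ hzp hzq => ?_⟩
  rw [arccos_le_iff_cos_le ⟨hR0.le, hRπ⟩] at hzp hzq
  exact (arccos_lt_iff_cos_lt ⟨hR0, hRπ.le⟩).2 (hlens z hzp hzq)
end

section
/- Let p, q be two distinct points of the hyperbolic plane, modelled by the upper half-plane ℍ (Mathlib's UpperHalfPlane with its hyperbolic metric), and let R > 0. Then there exists a point c ∈ ℍ with dist(p, c) = dist(q, c) = dist(p, q)/2 such that every z ∈ ℍ with dist(z, p) ≤ R and dist(z, q) ≤ R satisfies dist(z, c) < R. -/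
open Real UpperHalfPlane Complex

/-- Hyperbolic lens lemma in dimension two (upper half-plane model): the intersection
of two closed hyperbolic balls of equal radius `R` with distinct centres `p, q` is
contained in the open ball of radius `R` centred at the hyperbolic midpoint `c`
of `p` and `q`. -/
theorem hyperbolic_lens_subset_open_ball (p q : UpperHalfPlane) (hpq : p ≠ q)
    (R : ℝ) (hR : 0 < R) :
    ∃ c : UpperHalfPlane, dist p c = dist p q / 2 ∧ dist q c = dist p q / 2 ∧
      ∀ z : UpperHalfPlane, dist z p ≤ R → dist z q ≤ R → dist z c < R := by
  have hpim := p.im_pos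
  have hqim := q.im_pos
  have hs0 : (0:ℝ) < p.im + q.im := by positivity
  have hu0 : (0:ℝ) < Real.sqrt (p.im * q.im) := Real.sqrt_pos.2 (by positivity)
  have hu : Real.sqrt (p.im * q.im) ^ 2 = p.im * q.im := Real.sq_sqrt (by positivity)
  set v : ℝ := dist (p : ℂ) ((starRingEnd ℂ) (q : ℂ)) with hvdef
  have hv : v ^ 2 = (p.re - q.re) ^ 2 + (p.im + q.im) ^ 2 := by
    rw [hvdef, Complex.dist_eq_re_im, Real.sq_sqrt (by positivity)]
    simp only [Complex.conj_re, Complex.conj_im, coe_re, coe_im]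
    ring
  have hv0 : (0:ℝ) < v := by
    have h1 : (0:ℝ) ≤ v := dist_nonneg
    nlinarith [sq_nonneg (p.re - q.re)]
  set u : ℝ := Real.sqrt (p.im * q.im) with hudef
  have hyc0 : (0:ℝ) < u * v / (p.im + q.im) := by positivity
  set c : ℍ := UpperHalfPlane.mk
      ⟨(p.re * q.im + q.re * p.im) / (p.im + q.im), u * v / (p.im + q.im)⟩
      (by simpa using hyc0) with hcdef
  have hcre : c.re = (p.re * q.im + q.re * p.im) / (p.im + q.im) := rfl
  have hcim : c.im = u * v / (p.im + q.im) := rfl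
  set K : ℝ := Real.cosh (dist p q / 2) with hKdef
  have hK : K = v / (2 * u) := by
    rw [hKdef, cosh_half_dist]
  have hK1 : 1 < K := by
    rw [hKdef]
    refine Real.one_lt_cosh.2 ?_
    have : dist p q ≠ 0 := dist_ne_zero.2 hpq
    positivity
  -- the hyperbolic median identity
  have key : ∀ z : ℍ, Real.cosh (dist z p) + Real.cosh (dist z q)
      = 2 * K * Real.cosh (dist z c) := by
    intro z
    have hzim := z.im_pos
    have hdzp : dist (z : ℂ) (p : ℂ) ^ 2 = (z.re - p.re) ^ 2 + (z.im - p.im) ^ 2 := by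
      rw [Complex.dist_eq_re_im, Real.sq_sqrt (by positivity)]; rfl
    have hdzq : dist (z : ℂ) (q : ℂ) ^ 2 = (z.re - q.re) ^ 2 + (z.im - q.im) ^ 2 := by
      rw [Complex.dist_eq_re_im, Real.sq_sqrt (by positivity)]; rfl
    have hdzc : dist (z : ℂ) (c : ℂ) ^ 2
        = (z.re - c.re) ^ 2 + (z.im - c.im) ^ 2 := by
      rw [Complex.dist_eq_re_im, Real.sq_sqrt (by positivity)]; rfl
    rw [cosh_dist, cosh_dist, cosh_dist, hdzp, hdzq, hdzc, hK, hcre, hcim]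
    have rhs_eq : 2 * (v / (2 * u)) *
        (1 + ((z.re - (p.re * q.im + q.re * p.im) / (p.im + q.im)) ^ 2
            + (z.im - u * v / (p.im + q.im)) ^ 2)
          / (2 * z.im * (u * v / (p.im + q.im))))
        = (p.im + q.im) * ((z.re - (p.re * q.im + q.re * p.im) / (p.im + q.im)) ^ 2
            + z.im ^ 2) / (2 * z.im * (p.im * q.im))
          + ((p.re - q.re) ^ 2 + (p.im + q.im) ^ 2) / (2 * z.im * (p.im + q.im)) := by
      rw [← hu, ← hv]
      field_simp
      ring
    rw [rhs_eq]
    field_simp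
    ring
  have hK0 : (0:ℝ) < K := lt_trans one_pos hK1
  have hcosh_pc : Real.cosh (dist p c) = K := by
    have h := key p
    rw [dist_self, Real.cosh_zero] at h
    have hdq : Real.cosh (dist p q) = 2 * K ^ 2 - 1 := by
      have h2 : Real.cosh (2 * (dist p q / 2)) = 2 * Real.cosh (dist p q / 2) ^ 2 - 1 := by
        rw [Real.cosh_two_mul, Real.cosh_sq]; ring
      rw [show (2:ℝ) * (dist p q / 2) = dist p q from by ring] at h2
      rw [hKdef]; exact h2
    rw [hdq] at h
    have h2 : 2 * K * Real.cosh (dist p c) = 2 * K * K := by linarith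
    exact mul_left_cancel₀ (by positivity) h2
  have hcosh_qc : Real.cosh (dist q c) = K := by
    have h := key q
    rw [dist_self, Real.cosh_zero, dist_comm q p] at h
    have hdq : Real.cosh (dist p q) = 2 * K ^ 2 - 1 := by
      have h2 : Real.cosh (2 * (dist p q / 2)) = 2 * Real.cosh (dist p q / 2) ^ 2 - 1 := by
        rw [Real.cosh_two_mul, Real.cosh_sq]; ring
      rw [show (2:ℝ) * (dist p q / 2) = dist p q from by ring] at h2
      rw [hKdef]; exact h2
    rw [hdq] at h
    have h2 : 2 * K * Real.cosh (dist q c) = 2 * K * K := by linarith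
    exact mul_left_cancel₀ (by positivity) h2
  have dist_of_cosh : ∀ w : ℍ, Real.cosh (dist w c) = K → dist w c = dist p q / 2 := by
    intro w hw
    rw [hKdef] at hw
    have a := Real.cosh_le_cosh.1 hw.le
    have b := Real.cosh_le_cosh.1 hw.ge
    rw [_root_.abs_of_nonneg dist_nonneg, _root_.abs_of_nonneg (by positivity : (0:ℝ) ≤ dist p q / 2)] at a b
    linarith
  refine ⟨c, dist_of_cosh p hcosh_pc, dist_of_cosh q hcosh_qc, ?_⟩
  intro z hzp hzq
  have h := key z
  have e1 : Real.cosh (dist z p) ≤ Real.cosh R := by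
    refine Real.cosh_le_cosh.2 ?_
    rw [_root_.abs_of_nonneg dist_nonneg, _root_.abs_of_nonneg hR.le]; exact hzp
  have e2 : Real.cosh (dist z q) ≤ Real.cosh R := by
    refine Real.cosh_le_cosh.2 ?_
    rw [_root_.abs_of_nonneg dist_nonneg, _root_.abs_of_nonneg hR.le]; exact hzq
  have hcR : (0:ℝ) < Real.cosh R := Real.cosh_pos R
  have hlt : Real.cosh (dist z c) < Real.cosh R := by
    nlinarith [Real.cosh_pos (dist z c)]
  have := Real.cosh_lt_cosh.1 hlt
  rwa [_root_.abs_of_nonneg dist_nonneg, _root_.abs_of_nonneg hR.le] at this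
end

section
/- Let n ≥ 0, R > 0, and let K ⊆ EuclideanSpace ℝ (Fin (n+1)) be a compact convex set with nonempty interior. Assume that for every p in the frontier of K there exists a centre c with dist(p, c) = R and K ⊆ closedBall c R, and that K is not equal to closedBall c R for any centre c. Then there exist a point c₀ and a radius ρ < R such that K ⊆ closedBall c₀ ρ. -/
open Metric Set

private lemma segment_hits_frontier' {E : Type*} [NormedAddCommGroup E] [NormedSpace ℝ E]
    {A : Set E} {x y : E} (hx : x ∈ A) (hy : y ∉ A) :
    ∃ z ∈ segment ℝ x y, z ∈ frontier A := by
  have hconn : IsPreconnected (segment ℝ x y) := (convex_segment x y).isPreconnected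
  by_contra h
  push_neg at h
  have hsub : segment ℝ x y ⊆ interior A ∪ (closure A)ᶜ := by
    intro z hz
    have hzf := h z hz
    by_cases hzc : z ∈ closure A
    · left
      by_contra hzi
      exact hzf ⟨hzc, hzi⟩
    · right; exact hzc
  have h1 : (segment ℝ x y ∩ interior A).Nonempty := by
    refine ⟨x, left_mem_segment ℝ x y, ?_⟩
    rcases hsub (left_mem_segment ℝ x y) with h' | h'
    · exact h'
    · exact absurd (subset_closure hx) h'
  have h2 : (segment ℝ x y ∩ (closure A)ᶜ).Nonempty := by
    refine ⟨y, right_mem_segment ℝ x y, ?_⟩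
    rcases hsub (right_mem_segment ℝ x y) with h' | h'
    · exact absurd (interior_subset h') hy
    · exact h'
  obtain ⟨z, _, hz1, hz2⟩ :=
    hconn (interior A) (closure A)ᶜ isOpen_interior isClosed_closure.isOpen_compl hsub h1 h2
  exact hz2 (subset_closure (interior_subset hz1))

/-- Lemmas 3.1 + 3.2 combined (Euclidean form): a nontrivial convex body `K` such
that each boundary point admits a supporting ball of radius `R` containing `K`,
and which is not itself a closed ball of radius `R`, is contained in a closed ball
of some radius `ρ` strictly smaller than `R`. -/
theorem convex_body_subset_smaller_ball (n : ℕ) (R : ℝ) (hR : 0 < R)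
    (K : Set (EuclideanSpace ℝ (Fin (n + 1))))
    (hKcpt : IsCompact K) (hKconv : Convex ℝ K) (hKint : (interior K).Nonempty)
    (hsupp : ∀ p ∈ frontier K, ∃ c, dist p c = R ∧ K ⊆ Metric.closedBall c R)
    (hnotball : ∀ c, K ≠ Metric.closedBall c R) :
    ∃ c₀ ρ, ρ < R ∧ K ⊆ Metric.closedBall c₀ ρ := by
  by_cases hA : ∃ c₁ c₂, c₁ ≠ c₂ ∧ K ⊆ Metric.closedBall c₁ R ∧ K ⊆ Metric.closedBall c₂ R
  · obtain ⟨c₁, c₂, hne, h1, h2⟩ := hA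
    have hd : 0 < dist c₁ c₂ := dist_pos.2 hne
    refine ⟨midpoint ℝ c₁ c₂, Real.sqrt (R ^ 2 - (dist c₁ c₂ / 2) ^ 2), ?_, ?_⟩
    · rw [Real.sqrt_lt' hR]
      nlinarith
    · intro x hx
      have hx1 : dist x c₁ ≤ R := mem_closedBall.1 (h1 hx)
      have hx2 : dist x c₂ ≤ R := mem_closedBall.1 (h2 hx)
      have hap := EuclideanGeometry.dist_sq_add_dist_sq_eq_two_mul_dist_midpoint_sq_add_half_dist_sq
        x c₁ c₂
      rw [mem_closedBall]
      have d1 : (0:ℝ) ≤ dist x c₁ := dist_nonneg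
      have d2 : (0:ℝ) ≤ dist x c₂ := dist_nonneg
      have d3 : (0:ℝ) ≤ dist x (midpoint ℝ c₁ c₂) := dist_nonneg
      exact Real.le_sqrt_of_sq_le (by nlinarith)
  · push_neg at hA
    have hKne : K.Nonempty := hKint.mono interior_subset
    have hfr : (frontier K).Nonempty := by
      rw [nonempty_frontier_iff]
      exact ⟨hKne, hKcpt.ne_univ⟩
    obtain ⟨p₀, hp₀⟩ := hfr
    obtain ⟨c₀, hpc₀, hKc₀⟩ := hsupp p₀ hp₀
    have hall : ∀ p ∈ frontier K, dist p c₀ = R := by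
      intro p hp
      obtain ⟨c, hpc, hKc⟩ := hsupp p hp
      by_cases hcc : c = c₀
      · rwa [hcc] at hpc
      · exact absurd hKc₀ (hA c c₀ hcc hKc)
    exfalso
    apply hnotball c₀
    refine subset_antisymm hKc₀ ?_
    obtain ⟨x₀, hx₀⟩ := hKint
    have hx₀ball : x₀ ∈ ball c₀ R := by
      have hsub : interior K ⊆ ball c₀ R := by
        rw [← interior_closedBall c₀ hR.ne']
        exact interior_mono hKc₀
      exact hsub hx₀
    have hball : ball c₀ R ⊆ K := by
      intro y hy
      by_contra hyK
      obtain ⟨z, hzseg, hzfr⟩ := segment_hits_frontier' (interior_subset hx₀) hyK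
      have hzball : z ∈ ball c₀ R := (convex_ball c₀ R).segment_subset hx₀ball hy hzseg
      rw [mem_ball] at hzball
      have := hall z hzfr
      linarith
    rw [← closure_ball c₀ hR.ne']
    exact (IsClosed.closure_subset_iff hKcpt.isClosed).2 hball
end

section
/- Let n ≥ 1, let Ω ⊆ EuclideanSpace ℝ (Fin n) be open, let q : EuclideanSpace ℝ (Fin n) → ℝ be continuous, and let u : EuclideanSpace ℝ (Fin n) → ℝ be smooth (ContDiff ℝ ⊤) with u(x) > 0 for all x ∈ Ω and Δu(x) + q(x)·u(x) ≤ 0 for all x ∈ Ω, where Δ denotes the Euclidean Laplacian Δg(x) = ∑ᵢ ∂²g/∂xᵢ²(x). Then for every smooth f : EuclideanSpace ℝ (Fin n) → ℝ with compact support contained in Ω, one has ∫_Ω u(x)² · ‖∇(f/u)(x)‖² dx ≤ −∫_Ω f(x)·(Δf(x) + q(x)·f(x)) dx, where ∇ denotes the gradient. -/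
open MeasureTheory Filter

variable {n : ℕ}

lemma contDiff_fderiv_apply {g : EuclideanSpace ℝ (Fin n) → ℝ} (hg : ContDiff ℝ (⊤ : ℕ∞) g)
    (v : EuclideanSpace ℝ (Fin n)) : ContDiff ℝ (⊤ : ℕ∞) (fun y => fderiv ℝ g y v) :=
  (hg.fderiv_right (by simp)).clm_apply contDiff_const

lemma fderiv_mul_apply' {a b : EuclideanSpace ℝ (Fin n) → ℝ} (ha : Differentiable ℝ a)
    (hb : Differentiable ℝ b) (x v : EuclideanSpace ℝ (Fin n)) :
    fderiv ℝ (fun y => a y * b y) x v = fderiv ℝ a x v * b x + a x * fderiv ℝ b x v := by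
  rw [fderiv_fun_mul (ha x) (hb x)]
  simp [ContinuousLinearMap.add_apply, ContinuousLinearMap.smul_apply]
  ring

lemma fderiv_add_apply' {a b : EuclideanSpace ℝ (Fin n) → ℝ} (ha : Differentiable ℝ a)
    (hb : Differentiable ℝ b) (x v : EuclideanSpace ℝ (Fin n)) :
    fderiv ℝ (fun y => a y + b y) x v = fderiv ℝ a x v + fderiv ℝ b x v := by
  rw [fderiv_fun_add (ha x) (hb x)]; rfl

lemma integral_fderiv_apply_eq_zero {g : EuclideanSpace ℝ (Fin n) → ℝ} (hg : ContDiff ℝ (⊤ : ℕ∞) g)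
    (hgs : HasCompactSupport g) (v : EuclideanSpace ℝ (Fin n)) :
    ∫ x, fderiv ℝ g x v = 0 := by
  have h := integral_mul_fderiv_eq_neg_fderiv_mul_of_integrable (μ := volume)
    (f := g) (g := fun _ => (1:ℝ)) (v := v) ?_ ?_ ?_ (fun x _ => hg.differentiable (by simp) x)
    (fun x _ => differentiableAt_const 1)
  · simpa using h.symm
  · have : Continuous fun x => fderiv ℝ g x v * 1 :=
      ((contDiff_fderiv_apply hg v).continuous.mul continuous_const)
    exact this.integrable_of_hasCompactSupport ((hgs.fderiv_apply ℝ v).mul_right)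
  · simpa using (integrable_zero _ ℝ (volume : Measure (EuclideanSpace ℝ (Fin n))))
  · simpa using hg.continuous.integrable_of_hasCompactSupport hgs

lemma keyalg (k : ℕ) (r s Q : ℝ) (a b A B : Fin k → ℝ) :
    (r * s) * ((∑ i, (A i * s + 2 * (a i * b i) + r * B i)) + Q * (r * s)) =
      (∑ i, (((b i * s + s * b i) * r + (s * s) * a i) * a i + ((s * s) * r) * A i))
        - s ^ 2 * (∑ i, (a i) ^ 2) + r ^ 2 * s * ((∑ i, B i) + Q * s) := by
  have h1 : (r * s) * ((∑ i, (A i * s + 2 * (a i * b i) + r * B i)) + Q * (r * s))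
      = (∑ i, (r * s) * (A i * s + 2 * (a i * b i) + r * B i)) + Q * (r * s) * (r * s) := by
    rw [mul_add, Finset.mul_sum]; ring
  have h2 : ∀ i : Fin k, (r * s) * (A i * s + 2 * (a i * b i) + r * B i)
      = ((((b i * s + s * b i) * r + (s * s) * a i) * a i + ((s * s) * r) * A i)
          - s ^ 2 * (a i) ^ 2 + r ^ 2 * s * B i) := fun i => by ring
  rw [h1, Finset.sum_congr rfl fun i _ => h2 i, Finset.sum_add_distrib,
    Finset.sum_sub_distrib, ← Finset.mul_sum, ← Finset.mul_sum]
  ring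

/-- The Euclidean Laplacian of `g : ℝⁿ → ℝ`:
`Δg(x) = ∑ᵢ ∂²g/∂xᵢ²(x)`, expressed via iterated Fréchet derivatives in the
standard coordinate directions. -/
noncomputable def euclideanLaplacian {n : ℕ} (g : EuclideanSpace ℝ (Fin n) → ℝ)
    (x : EuclideanSpace ℝ (Fin n)) : ℝ :=
  ∑ i : Fin n,
    fderiv ℝ (fun y => fderiv ℝ g y (EuclideanSpace.single i 1)) x
      (EuclideanSpace.single i 1)

/-- Integral inequality behind the stability criterion (Proposition 2.3, Euclidean
domain form): if `u` is a smooth positive supersolution of the Schrödinger operator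
`T = Δ + q` on an open set `Ω`, then for every smooth compactly supported `f` on `Ω`,
`∫ u²·‖∇(f/u)‖² ≤ -∫ f·T(f)`. -/
theorem schroedinger_supersolution_quadratic_form_inequality
    (n : ℕ) (hn : 1 ≤ n)
    (Ω : Set (EuclideanSpace ℝ (Fin n))) (hΩ : IsOpen Ω)
    (q : EuclideanSpace ℝ (Fin n) → ℝ) (hq : Continuous q)
    (u : EuclideanSpace ℝ (Fin n) → ℝ) (hu : ContDiff ℝ (⊤ : ℕ∞) u)
    (hupos : ∀ x ∈ Ω, 0 < u x)
    (husuper : ∀ x ∈ Ω, euclideanLaplacian u x + q x * u x ≤ 0)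
    (f : EuclideanSpace ℝ (Fin n) → ℝ) (hf : ContDiff ℝ (⊤ : ℕ∞) f)
    (hfsupp : HasCompactSupport f) (hfsub : tsupport f ⊆ Ω) :
    ∫ x in Ω, (u x) ^ 2 * ‖gradient (fun y => f y / u y) x‖ ^ 2 ≤
      -∫ x in Ω, f x * (euclideanLaplacian f x + q x * f x) := by
  classical
  set ρ : EuclideanSpace ℝ (Fin n) → ℝ := fun y => f y / u y with hρdef
  have hρ : ContDiff ℝ (⊤ : ℕ∞) ρ := by
    rw [contDiff_iff_contDiffAt]
    intro x
    by_cases hx : x ∈ Ω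
    · exact (hf.contDiffAt).div (hu.contDiffAt) (ne_of_gt (hupos x hx))
    · have hxn : x ∉ tsupport f := fun h => hx (hfsub h)
      have hev : ρ =ᶠ[nhds x] fun _ => (0:ℝ) := by
        filter_upwards [(isClosed_tsupport f).isOpen_compl.mem_nhds hxn] with y hy
        simp [hρdef, image_eq_zero_of_notMem_tsupport hy]
      exact (contDiffAt_const (c := (0:ℝ))).congr_of_eventuallyEq hev
  have hfeq : f = fun y => ρ y * u y := by
    funext y
    by_cases hy : u y = 0
    · have hyΩ : y ∉ Ω := fun h => (hupos y h).ne' hy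
      have hf0 : f y = 0 := image_eq_zero_of_notMem_tsupport (fun h => hyΩ (hfsub h))
      simp [hρdef, hf0]
    · simp only [hρdef]; rw [div_mul_cancel₀ _ hy]
  have hρts : tsupport ρ ⊆ tsupport f := by
    apply closure_mono
    intro x hx
    simp only [Function.mem_support] at hx ⊢
    intro h0
    exact hx (by simp [hρdef, h0])
  have hzero : ∀ (g : EuclideanSpace ℝ (Fin n) → ℝ), tsupport g ⊆ tsupport f →
      ∀ x ∉ tsupport f, ∀ v, fderiv ℝ g x v = 0 := by
    intro g hg x hx v
    have hev : g =ᶠ[nhds x] fun _ => (0:ℝ) := by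
      filter_upwards [(isClosed_tsupport f).isOpen_compl.mem_nhds hx] with y hy
      exact image_eq_zero_of_notMem_tsupport (fun h => hy (hg h))
    rw [hev.fderiv_eq]
    simp
  have hρzero : ∀ x ∉ tsupport f, ρ x = 0 := fun x hx =>
    image_eq_zero_of_notMem_tsupport (fun h => hx (hρts h))
  have hgrad : ∀ x, ‖gradient ρ x‖ ^ 2
      = ∑ i, (fderiv ℝ ρ x (EuclideanSpace.single i 1)) ^ 2 := by
    intro x
    have hco : ∀ i : Fin n, (gradient ρ x) i = fderiv ℝ ρ x (EuclideanSpace.single i 1) := by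
      intro i
      have h1 : (inner ℝ (gradient ρ x) (EuclideanSpace.single i 1) : ℝ)
          = fderiv ℝ ρ x (EuclideanSpace.single i 1) := by
        rw [gradient]
        exact InnerProductSpace.toDual_symm_apply
      rw [← h1, EuclideanSpace.inner_single_right]
      simp
    rw [EuclideanSpace.norm_eq, Real.sq_sqrt (by positivity)]
    exact Finset.sum_congr rfl fun i _ => by rw [hco i]; simp [sq_abs]
  -- derivative smoothness shorthands
  have hdρ : ∀ v, ContDiff ℝ (⊤ : ℕ∞) (fun y => fderiv ℝ ρ y v) := fun v => contDiff_fderiv_apply hρ v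
  have hdu : ∀ v, ContDiff ℝ (⊤ : ℕ∞) (fun y => fderiv ℝ u y v) := fun v => contDiff_fderiv_apply hu v
  -- the vector field
  set W : Fin n → EuclideanSpace ℝ (Fin n) → ℝ :=
    fun i y => (u y * u y) * ρ y * fderiv ℝ ρ y (EuclideanSpace.single i 1) with hWdef
  have hW : ∀ i, ContDiff ℝ (⊤ : ℕ∞) (W i) := fun i =>
    ((hu.mul hu).mul hρ).mul (hdρ (EuclideanSpace.single i 1))
  have hWts : ∀ i, tsupport (W i) ⊆ tsupport f := by
    intro i
    have h1 : Function.support (W i) ⊆ Function.support ρ := by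
      intro x hx
      simp only [Function.mem_support] at hx ⊢
      intro h0
      exact hx (by simp [hWdef, h0])
    exact (closure_mono h1).trans hρts
  -- first derivative of f
  have hd1 : ∀ (v : EuclideanSpace ℝ (Fin n)) y,
      fderiv ℝ f y v = fderiv ℝ ρ y v * u y + ρ y * fderiv ℝ u y v := by
    intro v y
    rw [hfeq]
    exact fderiv_mul_apply' (hρ.differentiable (by simp)) (hu.differentiable (by simp)) y v
  -- second derivatives of f
  have hΔf : ∀ (i : Fin n) x, fderiv ℝ (fun y => fderiv ℝ f y (EuclideanSpace.single i 1)) x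
        (EuclideanSpace.single i 1)
      = fderiv ℝ (fun y => fderiv ℝ ρ y (EuclideanSpace.single i 1)) x
            (EuclideanSpace.single i 1) * u x
        + 2 * (fderiv ℝ ρ x (EuclideanSpace.single i 1) * fderiv ℝ u x (EuclideanSpace.single i 1))
        + ρ x * fderiv ℝ (fun y => fderiv ℝ u y (EuclideanSpace.single i 1)) x
            (EuclideanSpace.single i 1) := by
    intro i x
    have h1 : (fun y => fderiv ℝ f y (EuclideanSpace.single i 1))
        = fun y => (fderiv ℝ ρ y (EuclideanSpace.single i 1) * u y)
            + (ρ y * fderiv ℝ u y (EuclideanSpace.single i 1)) :=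
      funext fun y => hd1 (EuclideanSpace.single i 1) y
    rw [h1,
      fderiv_add_apply' (a := fun y => fderiv ℝ ρ y (EuclideanSpace.single i 1) * u y)
        (b := fun y => ρ y * fderiv ℝ u y (EuclideanSpace.single i 1))
        (((hdρ _).mul hu).differentiable (by simp)) ((hρ.mul (hdu _)).differentiable (by simp)),
      fderiv_mul_apply' (a := fun y => fderiv ℝ ρ y (EuclideanSpace.single i 1)) (b := u)
        ((hdρ _).differentiable (by simp)) (hu.differentiable (by simp)),
      fderiv_mul_apply' (a := ρ) (b := fun y => fderiv ℝ u y (EuclideanSpace.single i 1))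
        (hρ.differentiable (by simp)) ((hdu _).differentiable (by simp))]
    ring
  -- derivative of W i in direction i
  have hΔW : ∀ (i : Fin n) x, fderiv ℝ (W i) x (EuclideanSpace.single i 1)
      = ((fderiv ℝ u x (EuclideanSpace.single i 1) * u x
            + u x * fderiv ℝ u x (EuclideanSpace.single i 1)) * ρ x
          + (u x * u x) * fderiv ℝ ρ x (EuclideanSpace.single i 1))
            * fderiv ℝ ρ x (EuclideanSpace.single i 1)
        + ((u x * u x) * ρ x) * fderiv ℝ (fun y => fderiv ℝ ρ y (EuclideanSpace.single i 1)) x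
            (EuclideanSpace.single i 1) := by
    intro i x
    have h1 : W i = fun y => ((u y * u y) * ρ y) * fderiv ℝ ρ y (EuclideanSpace.single i 1) := rfl
    rw [h1,
      fderiv_mul_apply' (a := fun y => (u y * u y) * ρ y)
        (b := fun y => fderiv ℝ ρ y (EuclideanSpace.single i 1))
        (((hu.mul hu).mul hρ).differentiable (by simp)) ((hdρ _).differentiable (by simp)),
      fderiv_mul_apply' (a := fun y => u y * u y) (b := ρ)
        ((hu.mul hu).differentiable (by simp)) (hρ.differentiable (by simp)),
      fderiv_mul_apply' (a := u) (b := u)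
        (hu.differentiable (by simp)) (hu.differentiable (by simp))]
  -- the key pointwise identity
  have key : ∀ x, f x * (euclideanLaplacian f x + q x * f x)
      = (∑ i, fderiv ℝ (W i) x (EuclideanSpace.single i 1))
        - u x ^ 2 * (∑ i, (fderiv ℝ ρ x (EuclideanSpace.single i 1)) ^ 2)
        + ρ x ^ 2 * u x * (euclideanLaplacian u x + q x * u x) := by
    intro x
    have hfx : f x = ρ x * u x := congrFun hfeq x
    have hL : euclideanLaplacian f x
        = ∑ i, (fderiv ℝ (fun y => fderiv ℝ ρ y (EuclideanSpace.single i 1)) x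
              (EuclideanSpace.single i 1) * u x
            + 2 * (fderiv ℝ ρ x (EuclideanSpace.single i 1)
                * fderiv ℝ u x (EuclideanSpace.single i 1))
            + ρ x * fderiv ℝ (fun y => fderiv ℝ u y (EuclideanSpace.single i 1)) x
              (EuclideanSpace.single i 1)) := by
      unfold euclideanLaplacian
      exact Finset.sum_congr rfl fun i _ => hΔf i x
    have hWsum : (∑ i, fderiv ℝ (W i) x (EuclideanSpace.single i 1))
        = ∑ i, (((fderiv ℝ u x (EuclideanSpace.single i 1) * u x
              + u x * fderiv ℝ u x (EuclideanSpace.single i 1)) * ρ x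
            + (u x * u x) * fderiv ℝ ρ x (EuclideanSpace.single i 1))
              * fderiv ℝ ρ x (EuclideanSpace.single i 1)
          + ((u x * u x) * ρ x) * fderiv ℝ (fun y => fderiv ℝ ρ y (EuclideanSpace.single i 1)) x
              (EuclideanSpace.single i 1)) :=
      Finset.sum_congr rfl fun i _ => hΔW i x
    rw [hL, hWsum, hfx]
    unfold euclideanLaplacian
    exact keyalg n (ρ x) (u x) (q x) _ _ _ _
  -- continuity facts
  have hcont_dW : ∀ i : Fin n, Continuous fun x => fderiv ℝ (W i) x (EuclideanSpace.single i 1) :=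
    fun i => (contDiff_fderiv_apply (hW i) _).continuous
  have hcont_a : Continuous fun x =>
      u x ^ 2 * ∑ i, (fderiv ℝ ρ x (EuclideanSpace.single i 1)) ^ 2 :=
    ((hu.continuous.pow 2).mul (continuous_finset_sum _ fun i _ => ((hdρ _).continuous.pow 2)))
  have hcont_lap_u : Continuous fun x => euclideanLaplacian u x := by
    unfold euclideanLaplacian
    exact continuous_finset_sum _ fun i _ => (contDiff_fderiv_apply (hdu _) _).continuous
  have hcont3 : Continuous fun x => ρ x ^ 2 * u x * (euclideanLaplacian u x + q x * u x) :=
    (((hρ.continuous.pow 2).mul hu.continuous).mul (hcont_lap_u.add (hq.mul hu.continuous)))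
  -- integrability
  have hint1 : Integrable (fun x =>
      u x ^ 2 * ∑ i, (fderiv ℝ ρ x (EuclideanSpace.single i 1)) ^ 2) :=
    hcont_a.integrable_of_hasCompactSupport <| HasCompactSupport.intro hfsupp fun x hx => by
      have h0 : ∀ i : Fin n, fderiv ℝ ρ x (EuclideanSpace.single i 1) = 0 :=
        fun i => hzero ρ hρts x hx _
      simp [h0]
  have hint2 : ∀ i : Fin n,
      Integrable (fun x => fderiv ℝ (W i) x (EuclideanSpace.single i 1)) :=
    fun i => (hcont_dW i).integrable_of_hasCompactSupport <|
      HasCompactSupport.intro hfsupp fun x hx => hzero (W i) (hWts i) x hx _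
  have hint2s : Integrable (fun x => ∑ i, fderiv ℝ (W i) x (EuclideanSpace.single i 1)) :=
    integrable_finset_sum _ fun i _ => hint2 i
  have hint3 : Integrable (fun x => ρ x ^ 2 * u x * (euclideanLaplacian u x + q x * u x)) :=
    hcont3.integrable_of_hasCompactSupport <| HasCompactSupport.intro hfsupp fun x hx => by
      simp [hρzero x hx]
  have hWcs : ∀ i, HasCompactSupport (W i) := fun i =>
    HasCompactSupport.intro hfsupp fun x hx => by simp [hWdef, hρzero x hx]
  have hnΩ : ∀ x, x ∉ Ω → x ∉ tsupport f := fun x hx h => hx (hfsub h)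
  -- rewrite the goal
  simp only [hgrad, key]
  rw [setIntegral_eq_integral_of_forall_compl_eq_zero (fun x hx => by
      have h0 : ∀ i : Fin n, fderiv ℝ ρ x (EuclideanSpace.single i 1) = 0 :=
        fun i => hzero ρ hρts x (hnΩ x hx) _
      simp [h0]),
    setIntegral_eq_integral_of_forall_compl_eq_zero (fun x hx => by
      have h0 : ∀ i : Fin n, fderiv ℝ ρ x (EuclideanSpace.single i 1) = 0 :=
        fun i => hzero ρ hρts x (hnΩ x hx) _
      have h1 : ∀ i : Fin n, fderiv ℝ (W i) x (EuclideanSpace.single i 1) = 0 :=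
        fun i => hzero (W i) (hWts i) x (hnΩ x hx) _
      simp [h0, h1, hρzero x (hnΩ x hx)])]
  have hsub : Integrable (fun x => (∑ i, fderiv ℝ (W i) x (EuclideanSpace.single i 1))
      - u x ^ 2 * ∑ i, (fderiv ℝ ρ x (EuclideanSpace.single i 1)) ^ 2) volume :=
    hint2s.sub hint1
  rw [integral_add hsub hint3, integral_sub hint2s hint1]
  have hI2 : ∫ x, ∑ i, fderiv ℝ (W i) x (EuclideanSpace.single i 1) = 0 := by
    rw [integral_finset_sum _ fun i _ => hint2 i]
    exact Finset.sum_eq_zero fun i _ => integral_fderiv_apply_eq_zero (hW i) (hWcs i) _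
  have hI3 : ∫ x, ρ x ^ 2 * u x * (euclideanLaplacian u x + q x * u x) ≤ 0 := by
    apply integral_nonpos
    intro x
    by_cases hx : x ∈ Ω
    · exact mul_nonpos_of_nonneg_of_nonpos
        (mul_nonneg (sq_nonneg _) (hupos x hx).le) (husuper x hx)
    · simp [hρzero x (hnΩ x hx)]
  rw [hI2]
  linarith
end

section
/- Let n ≥ 1, let Ω ⊆ EuclideanSpace ℝ (Fin n) be open and connected, let q : EuclideanSpace ℝ (Fin n) → ℝ be continuous, and suppose there exists a smooth (ContDiff ℝ ⊤) function u : EuclideanSpace ℝ (Fin n) → ℝ with u(x) > 0 for all x ∈ Ω and Δu(x) + q(x)·u(x) ≤ 0 for all x ∈ Ω, where Δ denotes the Euclidean Laplacian Δg(x) = ∑ᵢ ∂²g/∂xᵢ²(x). Then for every smooth f : EuclideanSpace ℝ (Fin n) → ℝ with compact support contained in Ω, not identically zero, and with ∫_Ω f = 0, one has 0 < −∫_Ω f(x)·(Δf(x) + q(x)·f(x)) dx. -/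
open MeasureTheory

namespace SchroedingerAux

lemma clm_zero_of_single {n : ℕ} (L : EuclideanSpace ℝ (Fin n) →L[ℝ] ℝ)
    (h : ∀ i, L (EuclideanSpace.single i 1) = 0) : L = 0 := by
  have : (L : EuclideanSpace ℝ (Fin n) →ₗ[ℝ] ℝ) = (0 : EuclideanSpace ℝ (Fin n) →ₗ[ℝ] ℝ) := by
    apply Module.Basis.ext (EuclideanSpace.basisFun (Fin n) ℝ).toBasis
    intro i
    simpa [OrthonormalBasis.coe_toBasis, EuclideanSpace.basisFun_apply] using h i
  exact ContinuousLinearMap.coe_injective this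

lemma smooth_dd {n : ℕ} {φ : EuclideanSpace ℝ (Fin n) → ℝ} (hφ : ContDiff ℝ (⊤ : ℕ∞) φ)
    (v : EuclideanSpace ℝ (Fin n)) : ContDiff ℝ (⊤ : ℕ∞) (fun x => fderiv ℝ φ x v) :=
  (hφ.fderiv_right (by simp)).clm_apply contDiff_const

end SchroedingerAux

set_option maxHeartbeats 2000000 in
/-- Stability criterion (Proposition 2.3, Euclidean domain form): if the Schrödinger
operator `T = Δ + q` admits a smooth positive supersolution `u` on an open connected
set `Ω`, then `T` is strictly negative in the quadratic-form sense on all compactly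
supported smooth functions on `Ω` with mean zero that do not vanish identically. -/
theorem schroedinger_supersolution_strict_stability
    (n : ℕ) (hn : 1 ≤ n)
    (Ω : Set (EuclideanSpace ℝ (Fin n))) (hΩ : IsOpen Ω) (hΩconn : IsConnected Ω)
    (q : EuclideanSpace ℝ (Fin n) → ℝ) (hq : Continuous q)
    (u : EuclideanSpace ℝ (Fin n) → ℝ) (hu : ContDiff ℝ (⊤ : ℕ∞) u)
    (hupos : ∀ x ∈ Ω, 0 < u x)
    (husuper : ∀ x ∈ Ω, euclideanLaplacian u x + q x * u x ≤ 0)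
    (f : EuclideanSpace ℝ (Fin n) → ℝ) (hf : ContDiff ℝ (⊤ : ℕ∞) f)
    (hfsupp : HasCompactSupport f) (hfsub : tsupport f ⊆ Ω)
    (hfne : f ≠ 0) (hfmean : ∫ x in Ω, f x = 0) :
    0 < -∫ x in Ω, f x * (euclideanLaplacian f x + q x * f x) := by
  classical
  have hf1 : Differentiable ℝ f := hf.differentiable (by simp)
  have hu1 : Differentiable ℝ u := hu.differentiable (by simp)
  have hfc : Continuous f := hf.continuous
  have huc : Continuous u := hu.continuous
  have f0 : ∀ x ∉ tsupport f, f x = 0 := fun x hx => image_eq_zero_of_notMem_tsupport hx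
  have fΩ : ∀ x ∉ Ω, f x = 0 := fun x hx => f0 x fun hc => hx (hfsub hc)
  have hoc : IsOpen (tsupport f)ᶜ := (isClosed_tsupport f).isOpen_compl
  have Df0 : ∀ x ∉ tsupport f, fderiv ℝ f x = 0 := by
    intro x hx
    have hev : f =ᶠ[nhds x] (fun _ => (0 : ℝ)) := by
      filter_upwards [hoc.mem_nhds hx] with y hy
      exact f0 y hy
    rw [hev.fderiv_eq]
    exact fderiv_const_apply 0
  -- the ground-state quotients
  obtain ⟨g, hg⟩ : ∃ g : EuclideanSpace ℝ (Fin n) → ℝ,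
      g = fun x => if x ∈ Ω then f x * f x * (u x)⁻¹ else 0 := ⟨_, rfl⟩
  obtain ⟨h, hh⟩ : ∃ h : EuclideanSpace ℝ (Fin n) → ℝ,
      h = fun x => if x ∈ Ω then f x * (u x)⁻¹ else 0 := ⟨_, rfl⟩
  have hgΩ : ∀ x ∈ Ω, g x = f x * f x * (u x)⁻¹ := fun x hx => by rw [hg]; simp [hx]
  have hhΩ : ∀ x ∈ Ω, h x = f x * (u x)⁻¹ := fun x hx => by rw [hh]; simp [hx]
  have hg0 : ∀ x ∉ tsupport f, g x = 0 := by
    intro x hx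
    by_cases hxΩ : x ∈ Ω
    · rw [hg]; simp [hxΩ, f0 x hx]
    · rw [hg]; simp [hxΩ]
  have hh0 : ∀ x ∉ tsupport f, h x = 0 := by
    intro x hx
    by_cases hxΩ : x ∈ Ω
    · rw [hh]; simp [hxΩ, f0 x hx]
    · rw [hh]; simp [hxΩ]
  have hgsupp : HasCompactSupport g := HasCompactSupport.intro hfsupp hg0
  -- smoothness of g
  have hgsm : ContDiff ℝ (⊤ : ℕ∞) g := by
    rw [contDiff_iff_contDiffAt]
    intro x
    by_cases hx : x ∈ Ω
    · have hbase : ContDiffAt ℝ (⊤ : ℕ∞) (fun y => f y * f y * (u y)⁻¹) x :=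
        (hf.contDiffAt.mul hf.contDiffAt).mul (hu.contDiffAt.inv (hupos x hx).ne')
      refine hbase.congr_of_eventuallyEq ?_
      filter_upwards [hΩ.mem_nhds hx] with y hy
      rw [hg]; simp [hy]
    · have hx' : x ∉ tsupport f := fun hc => hx (hfsub hc)
      refine (contDiffAt_const (c := (0 : ℝ))).congr_of_eventuallyEq ?_
      filter_upwards [hoc.mem_nhds hx'] with y hy
      exact hg0 y hy
  have hgc : Continuous g := hgsm.continuous
  have hg1 : Differentiable ℝ g := hgsm.differentiable (by simp)
  have Dg0 : ∀ x ∉ tsupport f, fderiv ℝ g x = 0 := by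
    intro x hx
    have hev : g =ᶠ[nhds x] (fun _ => (0 : ℝ)) := by
      filter_upwards [hoc.mem_nhds hx] with y hy
      exact hg0 y hy
    rw [hev.fderiv_eq]
    exact fderiv_const_apply 0
  -- continuity of h
  have hhcont : Continuous h := by
    rw [continuous_iff_continuousAt]
    intro x
    by_cases hx : x ∈ Ω
    · have hbase : ContinuousAt (fun y => f y * (u y)⁻¹) x :=
        hfc.continuousAt.mul (huc.continuousAt.inv₀ (hupos x hx).ne')
      refine hbase.congr ?_
      filter_upwards [hΩ.mem_nhds hx] with y hy
      exact (hhΩ y hy).symm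
    · have hx' : x ∉ tsupport f := fun hc => hx (hfsub hc)
      refine continuousAt_const.congr (f := fun _ => (0 : ℝ)) ?_
      filter_upwards [hoc.mem_nhds hx'] with y hy
      exact (hh0 y hy).symm
  -- continuity of various derivatives
  have hDfc : ∀ i : Fin n,
      Continuous (fun x => fderiv ℝ f x (EuclideanSpace.single i 1)) :=
    fun i => (SchroedingerAux.smooth_dd hf _).continuous
  have hDuc : ∀ i : Fin n,
      Continuous (fun x => fderiv ℝ u x (EuclideanSpace.single i 1)) :=
    fun i => (SchroedingerAux.smooth_dd hu _).continuous
  have hDgc : ∀ i : Fin n,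
      Continuous (fun x => fderiv ℝ g x (EuclideanSpace.single i 1)) :=
    fun i => (SchroedingerAux.smooth_dd hgsm _).continuous
  have hDDfc : ∀ i : Fin n,
      Continuous (fun x => fderiv ℝ (fun y => fderiv ℝ f y (EuclideanSpace.single i 1)) x
        (EuclideanSpace.single i 1)) :=
    fun i => (SchroedingerAux.smooth_dd (SchroedingerAux.smooth_dd hf _) _).continuous
  have hDDuc : ∀ i : Fin n,
      Continuous (fun x => fderiv ℝ (fun y => fderiv ℝ u y (EuclideanSpace.single i 1)) x
        (EuclideanSpace.single i 1)) :=
    fun i => (SchroedingerAux.smooth_dd (SchroedingerAux.smooth_dd hu _) _).continuous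
  have hDfsupp : ∀ i : Fin n,
      HasCompactSupport (fun x => fderiv ℝ f x (EuclideanSpace.single i 1)) :=
    fun i => hfsupp.fderiv_apply ℝ _
  have hDgsupp : ∀ i : Fin n,
      HasCompactSupport (fun x => fderiv ℝ g x (EuclideanSpace.single i 1)) :=
    fun i => hgsupp.fderiv_apply ℝ _
  -- integrability helpers
  have hint : ∀ (φ ψ : EuclideanSpace ℝ (Fin n) → ℝ), Continuous φ → Continuous ψ →
      HasCompactSupport φ → Integrable (fun x => φ x * ψ x) volume := by
    intro φ ψ hφ hψ hsupp
    exact (hφ.mul hψ).integrable_of_hasCompactSupport (hsupp.mul_right)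
  -- continuity of laplacians
  have hLapf_c : Continuous (euclideanLaplacian f) := by
    have : Continuous (fun x => ∑ i : Fin n,
        fderiv ℝ (fun y => fderiv ℝ f y (EuclideanSpace.single i 1)) x
          (EuclideanSpace.single i 1)) := continuous_finset_sum _ fun i _ => hDDfc i
    exact this
  have hLapu_c : Continuous (euclideanLaplacian u) := by
    have : Continuous (fun x => ∑ i : Fin n,
        fderiv ℝ (fun y => fderiv ℝ u y (EuclideanSpace.single i 1)) x
          (EuclideanSpace.single i 1)) := continuous_finset_sum _ fun i _ => hDDuc i
    exact this
  -- Step 1: integration by parts for f against its Laplacian summands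
  have step1 : ∀ i : Fin n,
      ∫ x, f x * fderiv ℝ (fun y => fderiv ℝ f y (EuclideanSpace.single i 1)) x
          (EuclideanSpace.single i 1)
        = -∫ x, fderiv ℝ f x (EuclideanSpace.single i 1) *
            fderiv ℝ f x (EuclideanSpace.single i 1) := by
    intro i
    refine integral_mul_fderiv_eq_neg_fderiv_mul_of_integrable ?_ ?_ ?_ (fun x _ => hf1 x)
      (fun x _ => (SchroedingerAux.smooth_dd hf _).differentiable (by simp) x)
    · exact hint _ _ (hDfc i) (hDfc i) (hDfsupp i)
    · exact hint _ _ hfc (hDDfc i) hfsupp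
    · exact hint _ _ hfc (hDfc i) hfsupp
  -- Step 3: integration by parts for g against the Laplacian summands of u
  have step3 : ∀ i : Fin n,
      ∫ x, g x * fderiv ℝ (fun y => fderiv ℝ u y (EuclideanSpace.single i 1)) x
          (EuclideanSpace.single i 1)
        = -∫ x, fderiv ℝ g x (EuclideanSpace.single i 1) *
            fderiv ℝ u x (EuclideanSpace.single i 1) := by
    intro i
    refine integral_mul_fderiv_eq_neg_fderiv_mul_of_integrable ?_ ?_ ?_ (fun x _ => hg1 x)
      (fun x _ => (SchroedingerAux.smooth_dd hu _).differentiable (by simp) x)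
    · exact hint _ _ (hDgc i) (hDuc i) (hDgsupp i)
    · exact hint _ _ hgc (hDDuc i) hgsupp
    · exact hint _ _ hgc (hDuc i) hgsupp
  -- expansions of Laplacian integrals
  have expandF : ∫ x, f x * euclideanLaplacian f x
      = ∑ i : Fin n, ∫ x, f x * fderiv ℝ (fun y => fderiv ℝ f y (EuclideanSpace.single i 1)) x
          (EuclideanSpace.single i 1) := by
    simp_rw [euclideanLaplacian, Finset.mul_sum]
    exact integral_finset_sum _ fun i _ => hint _ _ hfc (hDDfc i) hfsupp
  have expandU : ∫ x, g x * euclideanLaplacian u x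
      = ∑ i : Fin n, ∫ x, g x * fderiv ℝ (fun y => fderiv ℝ u y (EuclideanSpace.single i 1)) x
          (EuclideanSpace.single i 1) := by
    simp_rw [euclideanLaplacian, Finset.mul_sum]
    exact integral_finset_sum _ fun i _ => hint _ _ hgc (hDDuc i) hgsupp
  -- Step 2: supersolution inequality
  have step2 : ∫ x, f x * (q x * f x) ≤ ∫ x, -(g x * euclideanLaplacian u x) := by
    refine integral_mono (hint _ _ hfc (hq.mul hfc) hfsupp)
      ((hint _ _ hgc hLapu_c hgsupp).neg) ?_
    intro x
    show f x * (q x * f x) ≤ -(g x * euclideanLaplacian u x)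
    by_cases hx : x ∈ Ω
    · have hux : (0 : ℝ) < u x := hupos x hx
      have h1 : f x * (q x * f x) = (q x * u x) * g x := by
        rw [hgΩ x hx]
        field_simp
      have h2 : q x * u x ≤ -(euclideanLaplacian u x) := by linarith [husuper x hx]
      have h3 : 0 ≤ g x := by
        rw [hgΩ x hx]
        exact mul_nonneg (mul_self_nonneg (f x)) (inv_nonneg.mpr hux.le)
      calc f x * (q x * f x) = (q x * u x) * g x := h1
        _ ≤ (-(euclideanLaplacian u x)) * g x := mul_le_mul_of_nonneg_right h2 h3
        _ = -(g x * euclideanLaplacian u x) := by ring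
    · have hx' : x ∉ tsupport f := fun hc => hx (hfsub hc)
      rw [f0 x hx', hg0 x hx']
      simp
  -- derivative of g on Ω
  have hDg : ∀ x ∈ Ω, ∀ i : Fin n, fderiv ℝ g x (EuclideanSpace.single i 1)
      = (f x * f x) * (-(u x ^ 2)⁻¹ * fderiv ℝ u x (EuclideanSpace.single i 1))
        + (u x)⁻¹ * (2 * f x * fderiv ℝ f x (EuclideanSpace.single i 1)) := by
    intro x hx i
    have hux : u x ≠ 0 := (hupos x hx).ne'
    have hinv : HasFDerivAt (fun y => (u y)⁻¹) ((-(u x ^ 2)⁻¹) • fderiv ℝ u x) x := by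
      simpa [Function.comp_def] using
        (hasDerivAt_inv hux).comp_hasFDerivAt x (hu1 x).hasFDerivAt
    have hff : HasFDerivAt (fun y => f y * f y) (f x • fderiv ℝ f x + f x • fderiv ℝ f x) x :=
      (hf1 x).hasFDerivAt.mul (hf1 x).hasFDerivAt
    have hprod := hff.mul hinv
    have hgx : HasFDerivAt g
        ((f x * f x) • ((-(u x ^ 2)⁻¹) • fderiv ℝ u x)
          + (u x)⁻¹ • (f x • fderiv ℝ f x + f x • fderiv ℝ f x)) x := by
      refine hprod.congr_of_eventuallyEq ?_
      filter_upwards [hΩ.mem_nhds hx] with y hy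
      rw [hg]; simp [hy]
    rw [hgx.fderiv]
    simp only [ContinuousLinearMap.add_apply, ContinuousLinearMap.smul_apply, smul_eq_mul]
    ring
  -- pointwise key identity
  have keyid : ∀ i : Fin n, ∀ x,
      fderiv ℝ f x (EuclideanSpace.single i 1) * fderiv ℝ f x (EuclideanSpace.single i 1)
        - fderiv ℝ g x (EuclideanSpace.single i 1) * fderiv ℝ u x (EuclideanSpace.single i 1)
      = (fderiv ℝ f x (EuclideanSpace.single i 1)
          - h x * fderiv ℝ u x (EuclideanSpace.single i 1)) ^ 2 := by
    intro i x
    by_cases hx : x ∈ Ω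
    · have hux : u x ≠ 0 := (hupos x hx).ne'
      rw [hDg x hx i, hhΩ x hx]
      field_simp
      ring
    · have hx' : x ∉ tsupport f := fun hc => hx (hfsub hc)
      rw [Df0 x hx', Dg0 x hx', hh0 x hx']
      simp
  -- the nonnegative function W
  obtain ⟨W, hW⟩ : ∃ W : EuclideanSpace ℝ (Fin n) → ℝ,
      W = fun x => ∑ i : Fin n, (fderiv ℝ f x (EuclideanSpace.single i 1)
        - h x * fderiv ℝ u x (EuclideanSpace.single i 1)) ^ 2 := ⟨_, rfl⟩
  have hWcont : Continuous W := by
    rw [hW]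
    exact continuous_finset_sum _ fun i _ => ((hDfc i).sub (hhcont.mul (hDuc i))).pow 2
  have hWnonneg : ∀ x, 0 ≤ W x := by
    intro x
    rw [hW]
    positivity
  have hW0 : ∀ x ∉ tsupport f, W x = 0 := by
    intro x hx
    rw [hW]
    simp [Df0 x hx, hh0 x hx]
  have hWint : Integrable W volume :=
    hWcont.integrable_of_hasCompactSupport (HasCompactSupport.intro hfsupp hW0)
  have hsqint : ∀ i : Fin n, Integrable (fun x => (fderiv ℝ f x (EuclideanSpace.single i 1)
      - h x * fderiv ℝ u x (EuclideanSpace.single i 1)) ^ 2) volume := by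
    intro i
    refine (((hDfc i).sub (hhcont.mul (hDuc i))).pow 2).integrable_of_hasCompactSupport
      (HasCompactSupport.intro hfsupp ?_)
    intro x hx
    simp [Df0 x hx, hh0 x hx]
  -- main upper bound: the quadratic form is ≤ -∫ W
  have hA : ∫ x, f x * euclideanLaplacian f x
      = -∑ i : Fin n, ∫ x, fderiv ℝ f x (EuclideanSpace.single i 1) *
          fderiv ℝ f x (EuclideanSpace.single i 1) := by
    rw [expandF, Finset.sum_congr rfl fun i _ => step1 i, Finset.sum_neg_distrib]
  have hB2 : ∫ x, -(g x * euclideanLaplacian u x)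
      = ∑ i : Fin n, ∫ x, fderiv ℝ g x (EuclideanSpace.single i 1) *
          fderiv ℝ u x (EuclideanSpace.single i 1) := by
    rw [integral_neg, expandU, Finset.sum_congr rfl fun i _ => step3 i,
      Finset.sum_neg_distrib, neg_neg]
  have hsub : ∀ i : Fin n,
      (∫ x, fderiv ℝ f x (EuclideanSpace.single i 1) * fderiv ℝ f x (EuclideanSpace.single i 1))
        - ∫ x, fderiv ℝ g x (EuclideanSpace.single i 1) * fderiv ℝ u x (EuclideanSpace.single i 1)
      = ∫ x, (fderiv ℝ f x (EuclideanSpace.single i 1)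
          - h x * fderiv ℝ u x (EuclideanSpace.single i 1)) ^ 2 := by
    intro i
    rw [← integral_sub (hint _ _ (hDfc i) (hDfc i) (hDfsupp i))
      (hint _ _ (hDgc i) (hDuc i) (hDgsupp i))]
    exact integral_congr_ae (Filter.Eventually.of_forall fun x => keyid i x)
  have hWsum : ∫ x, W x = ∑ i : Fin n, ∫ x, (fderiv ℝ f x (EuclideanSpace.single i 1)
      - h x * fderiv ℝ u x (EuclideanSpace.single i 1)) ^ 2 := by
    rw [hW]
    exact integral_finset_sum _ fun i _ => hsqint i
  have hbound : ∫ x, f x * (euclideanLaplacian f x + q x * f x) ≤ -∫ x, W x := by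
    have hsplit : ∫ x, f x * (euclideanLaplacian f x + q x * f x)
        = (∫ x, f x * euclideanLaplacian f x) + ∫ x, f x * (q x * f x) := by
      simp_rw [mul_add]
      exact integral_add (hint _ _ hfc hLapf_c hfsupp) (hint _ _ hfc (hq.mul hfc) hfsupp)
    rw [hsplit]
    have h1 : (∫ x, f x * euclideanLaplacian f x) + ∫ x, f x * (q x * f x)
        ≤ (∫ x, f x * euclideanLaplacian f x) + ∫ x, -(g x * euclideanLaplacian u x) := by
      linarith [step2]
    refine h1.trans ?_
    rw [hA, hB2, hWsum]
    have hsum : ∑ i : Fin n, ∫ x, (fderiv ℝ f x (EuclideanSpace.single i 1)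
        - h x * fderiv ℝ u x (EuclideanSpace.single i 1)) ^ 2
        = (∑ i : Fin n, ∫ x, fderiv ℝ f x (EuclideanSpace.single i 1) *
            fderiv ℝ f x (EuclideanSpace.single i 1))
          - ∑ i : Fin n, ∫ x, fderiv ℝ g x (EuclideanSpace.single i 1) *
            fderiv ℝ u x (EuclideanSpace.single i 1) := by
      rw [← Finset.sum_sub_distrib]
      exact Finset.sum_congr rfl fun i _ => (hsub i).symm
    rw [hsum]
    linarith
  -- strict positivity of ∫ W
  have hWpos : 0 < ∫ x, W x := by
    rcases (integral_nonneg (f := W) hWnonneg).lt_or_eq with hlt | heq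
    · exact hlt
    · exfalso
      have hz : ∫ x, W x = 0 := heq.symm
      have hae : W =ᶠ[ae volume] 0 := (integral_eq_zero_iff_of_nonneg hWnonneg hWint).mp hz
      have hWzero : W = fun _ => (0 : ℝ) :=
        (hWcont.ae_eq_iff_eq volume continuous_const).mp hae
      have hker : ∀ x ∈ Ω, ∀ i : Fin n, fderiv ℝ f x (EuclideanSpace.single i 1)
          = h x * fderiv ℝ u x (EuclideanSpace.single i 1) := by
        intro x hx i
        have hx0 : W x = 0 := by rw [hWzero]
        rw [hW] at hx0
        have hterm := (Finset.sum_eq_zero_iff_of_nonneg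
          (fun j _ => sq_nonneg _)).mp hx0 i (Finset.mem_univ i)
        have := sq_eq_zero_iff.mp hterm
        linarith
      -- there is a point of Ω outside the support of f
      have hx0 : ∃ x₀ ∈ Ω, x₀ ∉ tsupport f := by
        by_contra hc
        push_neg at hc
        have hΩeq : Ω = tsupport f := Set.Subset.antisymm (fun x hx => hc x hx) hfsub
        have hclopen : IsClopen Ω := ⟨hΩeq ▸ isClosed_tsupport f, hΩ⟩
        haveI : Nontrivial (EuclideanSpace ℝ (Fin n)) := by
          refine ⟨EuclideanSpace.single ⟨0, hn⟩ 1, 0, fun hE => ?_⟩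
          have := congrArg (fun v => v ⟨0, hn⟩) hE
          simp [EuclideanSpace.single_apply] at this
        have huniv : Ω = Set.univ := by
          rcases isClopen_iff.mp hclopen with hemp | huniv
          · exact absurd (hemp ▸ hΩconn.nonempty) (by simp)
          · exact huniv
        have hcs : CompactSpace (EuclideanSpace ℝ (Fin n)) :=
          isCompact_univ_iff.mp (by rw [← huniv, hΩeq]; exact hfsupp)
        exact (not_compactSpace_iff.mpr inferInstance) hcs
      obtain ⟨x₀, hx₀Ω, hx₀⟩ := hx0
      -- set of zeros of f in Ω is open
      have hSopen : IsOpen {x | x ∈ Ω ∧ f x = 0} := by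
        rw [Metric.isOpen_iff]
        rintro x ⟨hxΩ, hxf⟩
        obtain ⟨ε, hε, hball⟩ := Metric.isOpen_iff.mp hΩ x hxΩ
        refine ⟨ε, hε, ?_⟩
        intro y hy
        refine ⟨hball hy, ?_⟩
        have hconst : ∀ z ∈ Metric.ball x ε, f z * (u z)⁻¹ = f x * (u x)⁻¹ := by
          intro z hz
          refine Convex.is_const_of_fderivWithin_eq_zero (𝕜 := ℝ) (f := fun z => f z * (u z)⁻¹) (convex_ball x ε) ?_ ?_ hz
            (Metric.mem_ball_self hε)
          · intro w hw
            exact ((hf1 w).mul ((hu1 w).inv (hupos w (hball hw)).ne')).differentiableWithinAt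
          · intro w hw
            rw [fderivWithin_of_isOpen Metric.isOpen_ball hw]
            apply SchroedingerAux.clm_zero_of_single
            intro i
            have hwΩ := hball hw
            have huw : u w ≠ 0 := (hupos w hwΩ).ne'
            have hinv : HasFDerivAt (fun y => (u y)⁻¹) ((-(u w ^ 2)⁻¹) • fderiv ℝ u w) w := by
              simpa [Function.comp_def] using
                (hasDerivAt_inv huw).comp_hasFDerivAt w (hu1 w).hasFDerivAt
            have hprod : HasFDerivAt (fun z => f z * (u z)⁻¹) _ w := (hf1 w).hasFDerivAt.mul hinv
            rw [hprod.fderiv]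
            simp only [ContinuousLinearMap.add_apply, ContinuousLinearMap.smul_apply,
              smul_eq_mul]
            have hrel : fderiv ℝ f w (EuclideanSpace.single i 1)
                = f w * (u w)⁻¹ * fderiv ℝ u w (EuclideanSpace.single i 1) := by
              have hk := hker w hwΩ i
              rw [hhΩ w hwΩ] at hk
              linarith
            rw [hrel]
            field_simp
            ring
        have hcy := hconst y hy
        rw [hxf] at hcy
        have huy : u y ≠ 0 := (hupos y (hball hy)).ne'
        have : f y * (u y)⁻¹ = 0 := by rw [hcy]; ring
        rcases mul_eq_zero.mp this with h1 | h1
        · exact h1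
        · exact absurd (inv_eq_zero.mp h1) huy
      have hTopen : IsOpen {x | x ∈ Ω ∧ f x ≠ 0} := by
        have : {x | x ∈ Ω ∧ f x ≠ 0} = Ω ∩ f ⁻¹' ({0}ᶜ) := by
          ext z
          simp [Set.mem_setOf_eq, Set.mem_inter_iff]
        rw [this]
        exact hΩ.inter (isOpen_compl_singleton.preimage hfc)
      have hfΩ0 : ∀ x ∈ Ω, f x = 0 := by
        by_contra hcon
        push_neg at hcon
        obtain ⟨z, hzΩ, hz⟩ := hcon
        have hpre := hΩconn.isPreconnected {x | x ∈ Ω ∧ f x = 0} {x | x ∈ Ω ∧ f x ≠ 0}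
          hSopen hTopen
          (fun w hw => by
            by_cases hfw : f w = 0
            · exact Or.inl ⟨hw, hfw⟩
            · exact Or.inr ⟨hw, hfw⟩)
          ⟨x₀, hx₀Ω, hx₀Ω, f0 x₀ hx₀⟩ ⟨z, hzΩ, hzΩ, hz⟩
        obtain ⟨w, _, hwS, hwT⟩ := hpre
        exact hwT.2 hwS.2
      have : f = 0 := by
        funext x
        by_cases hx : x ∈ Ω
        · exact hfΩ0 x hx
        · exact fΩ x hx
      exact hfne this
  -- conclusion
  have hset : ∫ x in Ω, f x * (euclideanLaplacian f x + q x * f x)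
      = ∫ x, f x * (euclideanLaplacian f x + q x * f x) := by
    refine setIntegral_eq_integral_of_forall_compl_eq_zero ?_
    intro x hx
    rw [fΩ x hx]
    ring
  rw [hset]
  have : ∫ x, f x * (euclideanLaplacian f x + q x * f x) < 0 :=
    lt_of_le_of_lt hbound (by linarith)
  linarith
end
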